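/- If φ is a pure state of (Sym_r(ℝ[x]_{(Σ)}), Sym_r(ℝ[x]_{(Σ)})₊, I), then the restriction of φ to the real symmetric matrices Sym_r(ℝ) ⊆ Sym_r(ℝ[x]_{(Σ)}) is a pure state of (Sym_r(ℝ), Sym_r(ℝ)₊, I). -/

import Mathlib

open MvPolynomial Matrix

noncomputable section

/-- The field of rational functions in `n` variables over `ℝ`. -/
abbrev RatField (n : ℕ) := FractionRing (MvPolynomial (Fin n) ℝ)

/-- Inclusion of polynomials into the field of rational functions. -/
noncomputable def ι (n : ℕ) : MvPolynomial (Fin n) ℝ →+* RatField n :=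
  algebraMap (MvPolynomial (Fin n) ℝ) (RatField n)

/-- The linear form `Σ = x₁ + ⋯ + xₙ`. -/
noncomputable def sigma (n : ℕ) : MvPolynomial (Fin n) ℝ := ∑ i, X i

/-- The matrix `Σ_α A_α ⊗ x^α/Σ^{|α|}` determined by a finitely supported family of real
matrix coefficients `A_α`. -/
noncomputable def rep (n r : ℕ) (A : (Fin n →₀ ℕ) →₀ Matrix (Fin r) (Fin r) ℝ) :
    Matrix (Fin r) (Fin r) (RatField n) :=
  A.sum fun α Aα =>
    (ι n (monomial α (1 : ℝ)) / (ι n (sigma n)) ^ (α.sum fun _ e => e)) •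
      Aα.map (fun c => ι n (C c))

/-- `G ∈ Sym_r(ℝ[x]_{(Σ)})₊`. -/
def HasPSDCoeffs (n r : ℕ) (G : Matrix (Fin r) (Fin r) (RatField n)) : Prop :=
  ∃ A : (Fin n →₀ ℕ) →₀ Matrix (Fin r) (Fin r) ℝ,
    (∀ α, (A α).PosSemidef) ∧ G = rep n r A

/-- `G ∈ Sym_r(ℝ[x]_{(Σ)})`. -/
def InSymLoc (n r : ℕ) (G : Matrix (Fin r) (Fin r) (RatField n)) : Prop :=
  G.IsSymm ∧ ∀ i j, ∃ (d : ℕ) (f : MvPolynomial (Fin n) ℝ), f.IsHomogeneous d ∧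
    G i j = ι n f / (ι n (sigma n)) ^ d

/-- A state of `(Sym_r(ℝ[x]_{(Σ)}), Sym_r(ℝ[x]_{(Σ)})₊, I)`. -/
def IsStateLoc (n r : ℕ) (φ : Matrix (Fin r) (Fin r) (RatField n) → ℝ) : Prop :=
  (∀ G H, InSymLoc n r G → InSymLoc n r H → φ (G + H) = φ G + φ H) ∧
  (∀ G, HasPSDCoeffs n r G → 0 ≤ φ G) ∧
  φ 1 = 1

/-- A pure state of `(Sym_r(ℝ[x]_{(Σ)}), Sym_r(ℝ[x]_{(Σ)})₊, I)`. -/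
def IsPureStateLoc (n r : ℕ) (φ : Matrix (Fin r) (Fin r) (RatField n) → ℝ) : Prop :=
  IsStateLoc n r φ ∧ ∀ φ₁ φ₂, IsStateLoc n r φ₁ → IsStateLoc n r φ₂ →
    (∀ G, InSymLoc n r G → 2 * φ G = φ₁ G + φ₂ G) →
    ∀ G, InSymLoc n r G → φ₁ G = φ G ∧ φ₂ G = φ G

/-- A state of `(Sym_r(ℝ), Sym_r(ℝ)₊, I)`. -/
def IsStateSym (r : ℕ) (ψ : Matrix (Fin r) (Fin r) ℝ → ℝ) : Prop :=
  (∀ A B : Matrix (Fin r) (Fin r) ℝ, A.IsSymm → B.IsSymm → ψ (A + B) = ψ A + ψ B) ∧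
  (∀ A : Matrix (Fin r) (Fin r) ℝ, A.PosSemidef → 0 ≤ ψ A) ∧
  ψ 1 = 1

/-- A pure state of `(Sym_r(ℝ), Sym_r(ℝ)₊, I)`. -/
def IsPureStateSym (r : ℕ) (ψ : Matrix (Fin r) (Fin r) ℝ → ℝ) : Prop :=
  IsStateSym r ψ ∧ ∀ ψ₁ ψ₂ : Matrix (Fin r) (Fin r) ℝ → ℝ, IsStateSym r ψ₁ →
    IsStateSym r ψ₂ → (∀ A : Matrix (Fin r) (Fin r) ℝ, A.IsSymm → 2 * ψ A = ψ₁ A + ψ₂ A) →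
    ∀ A : Matrix (Fin r) (Fin r) ℝ, A.IsSymm → ψ₁ A = ψ A ∧ ψ₂ A = ψ A

/-!
Write `m_β = x^β / Σ^{|β|}`. Multiplication by `m_β` preserves the cone, and since
`∑ᵢ m_{eᵢ} = 1`, the functional `G ↦ φ (m_{eᵢ} • G)` is positive and dominated by `φ`; purity
makes it a multiple of `φ`, and by induction `φ (m_β • G) = τ_β φ G` with `τ_β = φ (m_β • I)`.
Every `G` in the system is a finite sum `∑ m_β • G_β` with real symmetric `G_β`, so
`φ G = ψ (∑ τ_β G_β) = ψ (E G)`, where `ψ` is the restriction (an `ℝ`-linear map, being additive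
and monotone) and `E G = (φ (G_ij • I))_ij` is additive, unital and positive. A decomposition
`ψ = (ψ₁ + ψ₂)/2` into states therefore lifts to `φ = (ψ₁ ∘ E + ψ₂ ∘ E)/2`, and purity of `φ`
forces `ψ₁ = ψ₂ = ψ` on `Sym_r(ℝ)`.
-/

theorem AddMonoidHom.apply_eq_mul_apply_one_of_monotone (f : ℝ →+ ℝ) (hf : Monotone f) (c : ℝ) :
    f c = c * f 1 := by
  have hrat : ∀ q : ℚ, f q = q * f 1 := fun q => by
    simpa [Rat.smul_def] using map_ratCast_smul f ℚ ℚ q (1 : ℝ)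
  rcases (show 0 ≤ f 1 by simpa using hf zero_le_one).eq_or_lt with h0 | hpos
  · obtain ⟨q, hq⟩ := exists_rat_gt c
    obtain ⟨q', hq'⟩ := exists_rat_lt c
    have hle := hf hq.le
    have hge := hf hq'.le
    rw [hrat, ← h0, mul_zero] at hle hge
    rw [← h0, mul_zero]
    exact le_antisymm hle hge
  · rw [← div_eq_iff hpos.ne']
    refine le_antisymm (le_of_forall_lt_rat_imp_le fun q hq => ?_)
      (le_of_forall_rat_lt_imp_le fun q hq => ?_)
    · rw [div_le_iff₀ hpos, ← hrat]
      exact hf hq.le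
    · rw [le_div_iff₀ hpos, ← hrat]
      exact hf hq.le

theorem map_sum_of_map_add {M N ι : Type*} [AddCommMonoid M] [AddCancelCommMonoid N]
    (S : AddSubmonoid M) {f : M → N} (hf : ∀ x ∈ S, ∀ y ∈ S, f (x + y) = f x + f y)
    (s : Finset ι) {g : ι → M} (hg : ∀ i ∈ s, g i ∈ S) :
    f (∑ i ∈ s, g i) = ∑ i ∈ s, f (g i) := by
  induction s using Finset.cons_induction with
  | empty => simpa using hf 0 S.zero_mem 0 S.zero_mem
  | cons a s ha ih =>
    have hs : ∀ i ∈ s, g i ∈ S := fun i hi => hg i (Finset.mem_cons_of_mem hi)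
    rw [Finset.sum_cons, Finset.sum_cons, hf _ (hg a (Finset.mem_cons_self a s)) _
      (S.sum_mem hs), ih hs]

namespace Matrix

def symmetricAddSubmonoid (m α : Type*) [AddMonoid α] : AddSubmonoid (Matrix m m α) where
  carrier := {A | A.IsSymm}
  add_mem' := IsSymm.add
  zero_mem' := isSymm_zero

theorem exists_posSemidef_add_eq {m : Type*} [Fintype m] [DecidableEq m]
    {A : Matrix m m ℝ} (hA : A.IsSymm) :
    ∃ N P : Matrix m m ℝ, N.PosSemidef ∧ P.PosSemidef ∧ A + N = P := by
  -- `(A + 1)² - (A - 1)² = 4 A`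
  refine ⟨(1 / 4 : ℝ) • ((A - 1)ᴴ * (A - 1)), (1 / 4 : ℝ) • ((A + 1)ᴴ * (A + 1)),
    (posSemidef_conjTranspose_mul_self _).smul (by norm_num),
    (posSemidef_conjTranspose_mul_self _).smul (by norm_num), ?_⟩
  rw [conjTranspose_sub, conjTranspose_add, conjTranspose_one,
    conjTranspose_eq_transpose_of_trivial, hA.eq]
  simp only [sub_mul, mul_sub, add_mul, mul_add, one_mul, mul_one]
  module

end Matrix

namespace IsStateSym

variable {r : ℕ} {ψ : Matrix (Fin r) (Fin r) ℝ → ℝ}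

theorem map_sum (hψ : IsStateSym r ψ) {ι : Type*} (s : Finset ι)
    {A : ι → Matrix (Fin r) (Fin r) ℝ} (hA : ∀ i ∈ s, (A i).IsSymm) :
    ψ (∑ i ∈ s, A i) = ∑ i ∈ s, ψ (A i) :=
  map_sum_of_map_add (symmetricAddSubmonoid _ _) (fun _ hA _ hB => hψ.1 _ _ hA hB) s hA

theorem map_smul_of_posSemidef (hψ : IsStateSym r ψ) {B : Matrix (Fin r) (Fin r) ℝ}
    (hB : B.PosSemidef) (c : ℝ) : ψ (c • B) = c * ψ B := by
  have hBs : B.IsSymm := isHermitian_iff_isSymm.mp hB.isHermitian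
  let f : ℝ →+ ℝ := AddMonoidHom.mk' (fun c => ψ (c • B)) fun x y => by
    simp only [add_smul]
    exact hψ.1 _ _ (hBs.smul x) (hBs.smul y)
  have hf : Monotone f := fun x y hxy => by
    have hsplit : y • B = x • B + (y - x) • B := by rw [← add_smul, add_sub_cancel]
    change ψ (x • B) ≤ ψ (y • B)
    rw [hsplit, hψ.1 _ _ (hBs.smul x) (hBs.smul _)]
    linarith [hψ.2.1 _ (hB.smul (sub_nonneg.mpr hxy))]
  simpa [f] using f.apply_eq_mul_apply_one_of_monotone hf c

theorem map_smul (hψ : IsStateSym r ψ) {A : Matrix (Fin r) (Fin r) ℝ} (hA : A.IsSymm) (c : ℝ) :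
    ψ (c • A) = c * ψ A := by
  obtain ⟨N, P, hN, hP, hAP⟩ := exists_posSemidef_add_eq hA
  have hNs : N.IsSymm := isHermitian_iff_isSymm.mp hN.isHermitian
  have hsum := hψ.1 _ _ hA hNs
  have hcsum := hψ.1 _ _ (hA.smul c) (hNs.smul c)
  rw [← smul_add, hAP, hψ.map_smul_of_posSemidef hP, hψ.map_smul_of_posSemidef hN] at hcsum
  rw [hAP] at hsum
  linear_combination c * hsum - hcsum

end IsStateSym

def κ (n : ℕ) : ℝ →+* RatField n := (ι n).comp C

def embed (n : ℕ) {r : ℕ} : Matrix (Fin r) (Fin r) ℝ →+* Matrix (Fin r) (Fin r) (RatField n) :=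
  (κ n).mapMatrix

def locMonomial (n : ℕ) (β : Fin n →₀ ℕ) : RatField n :=
  ι n (monomial β 1) / ι n (sigma n) ^ (β.sum fun _ e => e)

def locSum {n r : ℕ} (S : Finset (Fin n →₀ ℕ)) (B : (Fin n →₀ ℕ) → Matrix (Fin r) (Fin r) ℝ) :
    Matrix (Fin r) (Fin r) (RatField n) :=
  ∑ β ∈ S, locMonomial n β • embed n (B β)

section

variable {n r : ℕ}

theorem embed_apply (A : Matrix (Fin r) (Fin r) ℝ) (i j : Fin r) : embed n A i j = κ n (A i j) :=
  rfl

theorem κ_smul_one (c : ℝ) :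
    κ n c • (1 : Matrix (Fin r) (Fin r) (RatField n)) = embed n (c • 1) := by
  ext i j
  by_cases h : i = j <;> simp [embed_apply, one_apply, h]

theorem rep_eq_locSum (A : (Fin n →₀ ℕ) →₀ Matrix (Fin r) (Fin r) ℝ) :
    rep n r A = locSum A.support A :=
  rfl

theorem locSum_apply (S : Finset (Fin n →₀ ℕ)) (B : (Fin n →₀ ℕ) → Matrix (Fin r) (Fin r) ℝ)
    (i j : Fin r) : locSum S B i j = ∑ β ∈ S, locMonomial n β * κ n (B β i j) := by
  simp [locSum, Matrix.sum_apply, embed_apply]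

theorem ι_sigma_ne_zero (hn : 0 < n) : ι n (sigma n) ≠ 0 := by
  refine (map_ne_zero_iff _ (IsFractionRing.injective _ _)).mpr fun h => ?_
  simpa [sigma, hn.ne'] using congrArg (eval fun _ => (1 : ℝ)) h

theorem isHomogeneous_sigma : (sigma n).IsHomogeneous 1 :=
  IsHomogeneous.sum _ _ _ fun i _ => isHomogeneous_X ℝ i

theorem sum_locMonomial_single (hn : 0 < n) : ∑ i, locMonomial n (Finsupp.single i 1) = 1 := by
  simp only [locMonomial, Finsupp.sum_single_index, pow_one, ← Finset.sum_div, ← map_sum]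
  exact div_self (ι_sigma_ne_zero hn)

theorem locMonomial_zero : locMonomial n 0 = 1 := by
  simp [locMonomial]

theorem locMonomial_add (β γ : Fin n →₀ ℕ) :
    locMonomial n (β + γ) = locMonomial n β * locMonomial n γ := by
  rw [locMonomial, locMonomial, locMonomial, div_mul_div_comm, ← map_mul, monomial_mul, one_mul,
    Finsupp.sum_add_index' (fun _ => rfl) (fun _ _ _ => rfl), pow_add]

theorem locMonomial_single (i : Fin n) (k : ℕ) :
    locMonomial n (Finsupp.single i k) = locMonomial n (Finsupp.single i 1) ^ k := by
  induction k with
  | zero => rw [Finsupp.single_zero, locMonomial_zero, pow_zero]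
  | succ k ih => rw [Finsupp.single_add, locMonomial_add, ih, pow_succ]

/-- The ring `ℝ[x]_{(Σ)}`. -/
def locSigma (hn : 0 < n) : Subsemiring (RatField n) where
  carrier := {z | ∃ (d : ℕ) (f : MvPolynomial (Fin n) ℝ), f.IsHomogeneous d ∧
    z = ι n f / ι n (sigma n) ^ d}
  mul_mem' := by
    rintro _ _ ⟨d, f, hf, rfl⟩ ⟨e, g, hg, rfl⟩
    exact ⟨d + e, f * g, hf.mul hg, by rw [div_mul_div_comm, map_mul, pow_add]⟩
  one_mem' := ⟨0, 1, isHomogeneous_one _ _, by simp⟩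
  add_mem' := by
    rintro _ _ ⟨d, f, hf, rfl⟩ ⟨e, g, hg, rfl⟩
    have hσ : ∀ k, (sigma n ^ k).IsHomogeneous k := fun k => by
      simpa using isHomogeneous_sigma.pow k
    refine ⟨d + e, f * sigma n ^ e + sigma n ^ d * g, (hf.mul (hσ e)).add ?_, ?_⟩
    · simpa [add_comm] using (hσ d).mul hg
    · have hσ0 : ∀ k, ι n (sigma n) ^ k ≠ 0 := fun k => pow_ne_zero k (ι_sigma_ne_zero hn)
      rw [div_add_div _ _ (hσ0 d) (hσ0 e), map_add, map_mul, map_mul, map_pow, map_pow, pow_add]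
  zero_mem' := ⟨0, 0, isHomogeneous_zero _ _ _, by simp⟩

theorem locMonomial_mem (hn : 0 < n) (β : Fin n →₀ ℕ) : locMonomial n β ∈ locSigma hn :=
  ⟨_, _, isHomogeneous_monomial _ rfl, rfl⟩

theorem κ_mem (hn : 0 < n) (c : ℝ) : κ n c ∈ locSigma hn :=
  ⟨0, C c, isHomogeneous_C _ _, by simp [κ]⟩

theorem inSymLoc_iff (hn : 0 < n) {G : Matrix (Fin r) (Fin r) (RatField n)} :
    InSymLoc n r G ↔ G.IsSymm ∧ ∀ i j, G i j ∈ locSigma hn :=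
  Iff.rfl

def symLoc (hn : 0 < n) : AddSubmonoid (Matrix (Fin r) (Fin r) (RatField n)) where
  carrier := {G | InSymLoc n r G}
  add_mem' hG hH := (inSymLoc_iff hn).mpr ⟨hG.1.add hH.1, fun i j => add_mem (hG.2 i j) (hH.2 i j)⟩
  zero_mem' := (inSymLoc_iff hn).mpr ⟨isSymm_zero, fun _ _ => zero_mem (locSigma hn)⟩

theorem mem_symLoc (hn : 0 < n) {G : Matrix (Fin r) (Fin r) (RatField n)} :
    G ∈ symLoc hn ↔ InSymLoc n r G :=
  Iff.rfl

theorem InSymLoc.smul (hn : 0 < n) {s : RatField n} (hs : s ∈ locSigma hn)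
    {G : Matrix (Fin r) (Fin r) (RatField n)} (hG : InSymLoc n r G) : InSymLoc n r (s • G) :=
  (inSymLoc_iff hn).mpr ⟨hG.1.smul s, fun i j => mul_mem hs (hG.2 i j)⟩

theorem inSymLoc_smul_one (hn : 0 < n) {s : RatField n} (hs : s ∈ locSigma hn) :
    InSymLoc n r (s • 1) :=
  InSymLoc.smul hn hs <| (inSymLoc_iff hn).mpr ⟨isSymm_one, fun i j => by
    by_cases h : i = j <;> simp [one_apply, h, one_mem, zero_mem]⟩

theorem inSymLoc_embed (hn : 0 < n) {A : Matrix (Fin r) (Fin r) ℝ} (hA : A.IsSymm) :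
    InSymLoc n r (embed n A) :=
  ⟨hA.map _, fun i j => κ_mem hn (A i j)⟩

theorem inSymLoc_locSum (hn : 0 < n) (S : Finset (Fin n →₀ ℕ))
    {B : (Fin n →₀ ℕ) → Matrix (Fin r) (Fin r) ℝ} (hB : ∀ β ∈ S, (B β).IsSymm) :
    InSymLoc n r (locSum S B) :=
  (mem_symLoc hn).mp <| (symLoc hn).sum_mem fun β hβ =>
    (inSymLoc_embed hn (hB β hβ)).smul hn (locMonomial_mem hn β)

theorem MvPolynomial.IsHomogeneous.div_sigma_pow_eq_sum {f : MvPolynomial (Fin n) ℝ} {d : ℕ}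
    (hf : f.IsHomogeneous d) {S : Finset (Fin n →₀ ℕ)} (hS : f.support ⊆ S) :
    ι n f / ι n (sigma n) ^ d = ∑ β ∈ S, locMonomial n β * κ n (coeff β f) := by
  rw [← Finset.sum_subset hS fun β _ hβ => by simp [notMem_support_iff.mp hβ]]
  conv_lhs => rw [f.as_sum, map_sum, Finset.sum_div]
  refine Finset.sum_congr rfl fun β hβ => ?_
  have hdeg : (β.sum fun _ e => e) = d := by
    simp [← hf (mem_support_iff.mp hβ), Finsupp.weight_apply, Finsupp.sum]
  rw [locMonomial, hdeg, κ, RingHom.comp_apply, div_mul_eq_mul_div, ← map_mul, mul_comm,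
    C_mul_monomial, mul_one]

theorem InSymLoc.exists_eq_locSum {G : Matrix (Fin r) (Fin r) (RatField n)}
    (hG : InSymLoc n r G) :
    ∃ (S : Finset (Fin n →₀ ℕ)) (B : (Fin n →₀ ℕ) → Matrix (Fin r) (Fin r) ℝ),
      (∀ β, (B β).IsSymm) ∧ G = locSum S B := by
  choose d f hf hfG using hG.2
  -- reading the entries off the upper triangle makes the coefficient matrices symmetric
  have hG' : ∀ i j, G i j = G (min i j) (max i j) := fun i j => by
    rcases le_total i j with h | h <;> simp [h, hG.1.apply]
  let S := Finset.univ.biUnion fun p : Fin r × Fin r => (f p.1 p.2).support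
  refine ⟨S, fun β => of fun i j => coeff β (f (min i j) (max i j)),
    fun β => IsSymm.ext fun i j => by simp [min_comm, max_comm], ?_⟩
  ext i j
  rw [locSum_apply, hG', hfG, (hf _ _).div_sigma_pow_eq_sum
    (Finset.subset_biUnion_of_mem (fun p : Fin r × Fin r => (f p.1 p.2).support)
      (Finset.mem_univ (min i j, max i j)))]
  rfl

theorem hasPSDCoeffs_embed {A : Matrix (Fin r) (Fin r) ℝ} (hA : A.PosSemidef) :
    HasPSDCoeffs n r (embed n A) := by
  refine ⟨Finsupp.single 0 A, fun α => ?_, ?_⟩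
  · by_cases h : α = 0
    · simpa [h] using hA
    · simpa [Finsupp.single_apply, Ne.symm h] using PosSemidef.zero
  · show embed n A = (Finsupp.single 0 A).sum fun α Aα => locMonomial n α • embed n Aα
    rw [Finsupp.sum_single_index (by simp), locMonomial_zero, one_smul]

theorem hasPSDCoeffs_one : HasPSDCoeffs n r 1 := by
  simpa using hasPSDCoeffs_embed (n := n) (PosSemidef.one (n := Fin r) (R := ℝ))

theorem HasPSDCoeffs.inSymLoc (hn : 0 < n) {G : Matrix (Fin r) (Fin r) (RatField n)}
    (hG : HasPSDCoeffs n r G) : InSymLoc n r G := by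
  obtain ⟨A, hA, rfl⟩ := hG
  exact inSymLoc_locSum hn _ fun α _ => isHermitian_iff_isSymm.mp (hA α).isHermitian

theorem HasPSDCoeffs.locMonomial_smul {G : Matrix (Fin r) (Fin r) (RatField n)}
    (hG : HasPSDCoeffs n r G) (β : Fin n →₀ ℕ) : HasPSDCoeffs n r (locMonomial n β • G) := by
  obtain ⟨A, hA, rfl⟩ := hG
  let shift : (Fin n →₀ ℕ) ↪ (Fin n →₀ ℕ) := ⟨(· + β), add_left_injective β⟩
  refine ⟨A.embDomain shift, fun γ => ?_, ?_⟩
  · by_cases h : γ ∈ Set.range shift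
    · obtain ⟨α, rfl⟩ := h
      simpa [Finsupp.embDomain_apply_self] using hA α
    · simpa [Finsupp.embDomain_of_notMem_range _ _ _ h] using PosSemidef.zero
  · rw [rep, rep, Finsupp.sum_embDomain, Finsupp.smul_sum]
    refine Finsupp.sum_congr fun α _ => ?_
    rw [← locMonomial.eq_def, ← locMonomial.eq_def, smul_smul, ← locMonomial_add, add_comm]
    rfl

end

namespace IsStateLoc

variable {n r : ℕ} {φ : Matrix (Fin r) (Fin r) (RatField n) → ℝ}

theorem map_sum (hn : 0 < n) (hφ : IsStateLoc n r φ) {ι : Type*} (s : Finset ι)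
    {G : ι → Matrix (Fin r) (Fin r) (RatField n)} (hG : ∀ i ∈ s, InSymLoc n r (G i)) :
    φ (∑ i ∈ s, G i) = ∑ i ∈ s, φ (G i) :=
  map_sum_of_map_add (symLoc hn) (fun _ hG _ hH => hφ.1 _ _ hG hH) s hG

theorem comp_embed (hn : 0 < n) (hφ : IsStateLoc n r φ) :
    IsStateSym r fun A => φ (embed n A) :=
  ⟨fun A B hA hB => by
      change φ (embed n (A + B)) = φ (embed n A) + φ (embed n B)
      rw [map_add]
      exact hφ.1 _ _ (inSymLoc_embed hn hA) (inSymLoc_embed hn hB),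
    fun _ hA => hφ.2.1 _ (hasPSDCoeffs_embed hA),
    by simpa only [map_one] using hφ.2.2⟩

theorem map_κ_smul_one (hn : 0 < n) (hφ : IsStateLoc n r φ) (c : ℝ) : φ (κ n c • 1) = c := by
  rw [κ_smul_one, (hφ.comp_embed hn).map_smul isSymm_one, map_one, hφ.2.2, mul_one]

end IsStateLoc

def multiplicativeDomain {n r : ℕ} {φ : Matrix (Fin r) (Fin r) (RatField n) → ℝ} (hn : 0 < n)
    (h1 : φ 1 = 1) : Submonoid (RatField n) where
  carrier := {s | s ∈ locSigma hn ∧ ∀ G, InSymLoc n r G → φ (s • G) = φ (s • 1) * φ G}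
  one_mem' := ⟨one_mem _, fun G _ => by simp [h1]⟩
  mul_mem' := by
    rintro s t ⟨hs, hsφ⟩ ⟨ht, htφ⟩
    refine ⟨mul_mem hs ht, fun G hG => ?_⟩
    rw [mul_smul, mul_smul, hsφ _ (hG.smul hn ht), hsφ _ (inSymLoc_smul_one hn ht), htφ G hG]
    ring

namespace IsPureStateLoc

variable {n r : ℕ} {φ : Matrix (Fin r) (Fin r) (RatField n) → ℝ}

theorem eq_mul_of_le (hφ : IsPureStateLoc n r φ) {ψ : Matrix (Fin r) (Fin r) (RatField n) → ℝ}
    (hadd : ∀ G H, InSymLoc n r G → InSymLoc n r H → ψ (G + H) = ψ G + ψ H)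
    (hpos : ∀ G, HasPSDCoeffs n r G → 0 ≤ ψ G) (hle : ∀ G, HasPSDCoeffs n r G → ψ G ≤ φ G)
    {G : Matrix (Fin r) (Fin r) (RatField n)} (hG : InSymLoc n r G) : ψ G = ψ 1 * φ G := by
  set t := ψ 1
  have ht0 : 0 ≤ t := hpos 1 hasPSDCoeffs_one
  have ht1 : t ≤ 1 := hφ.1.2.2 ▸ hle 1 hasPSDCoeffs_one
  have hperturb : ∀ s : ℝ, |s| ≤ 1 → IsStateLoc n r fun G => φ G + s * (ψ G - t * φ G) := by
    intro s hs
    obtain ⟨hs₁, hs₂⟩ := abs_le.mp hs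
    refine ⟨fun G H hG hH => ?_, fun G hG => ?_, ?_⟩ <;> dsimp only
    · rw [hφ.1.1 G H hG hH, hadd G H hG hH]
      ring
    · have hφG := hφ.1.2.1 G hG
      have hψG := hpos G hG
      have hψφ := hle G hG
      -- the expression is affine in `s` and nonnegative at `s = ±1`
      have h₁ : 0 ≤ 1 + s := by linarith
      have h₂ : 0 ≤ 1 - s := by linarith
      nlinarith [mul_nonneg (mul_nonneg h₁ (sub_nonneg.mpr ht1)) hφG, mul_nonneg h₁ hψG,
        mul_nonneg h₂ (sub_nonneg.mpr hψφ), mul_nonneg (mul_nonneg h₂ ht0) hφG]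
    · simp only [hφ.1.2.2, t]
      ring
  have h := hφ.2 _ _ (hperturb 1 (by norm_num)) (hperturb (-1) (by norm_num))
    (fun G _ => by ring) G hG
  linarith [h.1]

theorem map_locMonomial_single_smul (hn : 0 < n) (hφ : IsPureStateLoc n r φ) (i : Fin n)
    {G : Matrix (Fin r) (Fin r) (RatField n)} (hG : InSymLoc n r G) :
    φ (locMonomial n (Finsupp.single i 1) • G) =
      φ (locMonomial n (Finsupp.single i 1) • 1) * φ G := by
  refine hφ.eq_mul_of_le (ψ := fun G => φ (locMonomial n (Finsupp.single i 1) • G))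
    (fun G H hG hH => ?_) (fun G hG => hφ.1.2.1 _ (hG.locMonomial_smul _)) (fun G hG => ?_) hG
  · rw [smul_add]
    exact hφ.1.1 _ _ (hG.smul hn (locMonomial_mem hn _)) (hH.smul hn (locMonomial_mem hn _))
  · have hvG : ∀ j, HasPSDCoeffs n r (locMonomial n (Finsupp.single j 1) • G) :=
      fun j => hG.locMonomial_smul _
    calc φ (locMonomial n (Finsupp.single i 1) • G)
        ≤ ∑ j, φ (locMonomial n (Finsupp.single j 1) • G) :=
          Finset.single_le_sum (fun j _ => hφ.1.2.1 _ (hvG j)) (Finset.mem_univ i)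
      _ = φ G := by
          rw [← hφ.1.map_sum hn _ fun j _ => (hvG j).inSymLoc hn, ← Finset.sum_smul,
            sum_locMonomial_single hn, one_smul]

theorem locMonomial_mem_multiplicativeDomain (hn : 0 < n) (hφ : IsPureStateLoc n r φ)
    (β : Fin n →₀ ℕ) : locMonomial n β ∈ multiplicativeDomain hn hφ.1.2.2 := by
  induction β using Finsupp.induction_linear with
  | zero => simp [locMonomial_zero, one_mem]
  | add β γ hβ hγ => simpa [locMonomial_add] using mul_mem hβ hγ
  | single i k =>
    rw [locMonomial_single]
    have hv : locMonomial n (Finsupp.single i 1) ∈ multiplicativeDomain hn hφ.1.2.2 :=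
      ⟨locMonomial_mem hn _, fun G hG => hφ.map_locMonomial_single_smul hn i hG⟩
    exact pow_mem hv k

theorem map_locMonomial_smul (hn : 0 < n) (hφ : IsPureStateLoc n r φ) (β : Fin n →₀ ℕ)
    {G : Matrix (Fin r) (Fin r) (RatField n)} (hG : InSymLoc n r G) :
    φ (locMonomial n β • G) = φ (locMonomial n β • 1) * φ G :=
  (hφ.locMonomial_mem_multiplicativeDomain hn β).2 G hG

end IsPureStateLoc

def condExp {n r : ℕ} (φ : Matrix (Fin r) (Fin r) (RatField n) → ℝ)
    (G : Matrix (Fin r) (Fin r) (RatField n)) : Matrix (Fin r) (Fin r) ℝ :=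
  of fun i j => φ (G i j • 1)

section condExp

variable {n r : ℕ} {φ : Matrix (Fin r) (Fin r) (RatField n) → ℝ}

theorem condExp_isSymm {G : Matrix (Fin r) (Fin r) (RatField n)} (hG : InSymLoc n r G) :
    (condExp φ G).IsSymm :=
  IsSymm.ext fun i j => by simp [condExp, hG.1.apply]

theorem condExp_add (hn : 0 < n) (hφ : IsStateLoc n r φ)
    {G H : Matrix (Fin r) (Fin r) (RatField n)} (hG : InSymLoc n r G) (hH : InSymLoc n r H) :
    condExp φ (G + H) = condExp φ G + condExp φ H := by
  ext i j
  simp only [condExp, of_apply, Matrix.add_apply, add_smul]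
  exact hφ.1 _ _ (inSymLoc_smul_one hn (hG.2 i j)) (inSymLoc_smul_one hn (hH.2 i j))

theorem condExp_embed (hn : 0 < n) (hφ : IsStateLoc n r φ) (A : Matrix (Fin r) (Fin r) ℝ) :
    condExp φ (embed n A) = A := by
  ext i j
  exact hφ.map_κ_smul_one hn (A i j)

theorem IsPureStateLoc.condExp_locSum (hn : 0 < n) (hφ : IsPureStateLoc n r φ)
    (S : Finset (Fin n →₀ ℕ)) (B : (Fin n →₀ ℕ) → Matrix (Fin r) (Fin r) ℝ) :
    condExp φ (locSum S B) = ∑ β ∈ S, φ (locMonomial n β • 1) • B β := by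
  ext i j
  simp only [condExp, of_apply, locSum_apply, Finset.sum_smul, Matrix.sum_apply,
    Matrix.smul_apply, smul_eq_mul]
  rw [hφ.1.map_sum hn _ fun β _ =>
    inSymLoc_smul_one hn (mul_mem (locMonomial_mem hn β) (κ_mem hn _))]
  refine Finset.sum_congr rfl fun β _ => ?_
  rw [mul_smul, hφ.map_locMonomial_smul hn β (inSymLoc_smul_one hn (κ_mem hn _)),
    hφ.1.map_κ_smul_one hn]

theorem IsPureStateLoc.condExp_posSemidef (hn : 0 < n) (hφ : IsPureStateLoc n r φ)
    {G : Matrix (Fin r) (Fin r) (RatField n)} (hG : HasPSDCoeffs n r G) :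
    (condExp φ G).PosSemidef := by
  obtain ⟨A, hA, rfl⟩ := hG
  rw [rep_eq_locSum, hφ.condExp_locSum hn]
  exact posSemidef_sum _ fun α _ =>
    (hA α).smul (hφ.1.2.1 _ (hasPSDCoeffs_one.locMonomial_smul α))

theorem IsPureStateLoc.map_embed_condExp (hn : 0 < n) (hφ : IsPureStateLoc n r φ)
    {G : Matrix (Fin r) (Fin r) (RatField n)} (hG : InSymLoc n r G) :
    φ G = φ (embed n (condExp φ G)) := by
  obtain ⟨S, B, hB, rfl⟩ := hG.exists_eq_locSum
  have hψ := hφ.1.comp_embed hn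
  calc φ (locSum S B)
      = ∑ β ∈ S, φ (locMonomial n β • 1) * φ (embed n (B β)) := by
        rw [locSum, hφ.1.map_sum hn _ fun β _ =>
          (inSymLoc_embed hn (hB β)).smul hn (locMonomial_mem hn β)]
        exact Finset.sum_congr rfl fun β _ =>
          hφ.map_locMonomial_smul hn β (inSymLoc_embed hn (hB β))
    _ = φ (embed n (∑ β ∈ S, φ (locMonomial n β • 1) • B β)) := by
        rw [hψ.map_sum _ fun β _ => (hB β).smul _]
        exact Finset.sum_congr rfl fun β _ => (hψ.map_smul (hB β) _).symm
    _ = φ (embed n (condExp φ (locSum S B))) := by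
        rw [hφ.condExp_locSum hn]

theorem IsStateSym.comp_condExp (hn : 0 < n) (hφ : IsPureStateLoc n r φ)
    {ψ : Matrix (Fin r) (Fin r) ℝ → ℝ} (hψ : IsStateSym r ψ) :
    IsStateLoc n r fun G => ψ (condExp φ G) := by
  refine ⟨fun G H hG hH => ?_, fun G hG => hψ.2.1 _ (hφ.condExp_posSemidef hn hG), ?_⟩
  · change ψ (condExp φ (G + H)) = ψ (condExp φ G) + ψ (condExp φ H)
    rw [condExp_add hn hφ.1 hG hH]
    exact hψ.1 _ _ (condExp_isSymm hG) (condExp_isSymm hH)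
  · change ψ (condExp φ 1) = 1
    rw [← map_one (embed n), condExp_embed hn hφ.1]
    exact hψ.2.2

end condExp

/-- The restriction of a pure state of `(Sym_r(ℝ[x]_{(Σ)}), Sym_r(ℝ[x]_{(Σ)})₊, I)` to the
real symmetric matrices is a pure state of `(Sym_r(ℝ), Sym_r(ℝ)₊, I)`. -/
theorem restriction_of_pure_state {n r : ℕ} (hn : 0 < n)
    (φ : Matrix (Fin r) (Fin r) (RatField n) → ℝ) (hφ : IsPureStateLoc n r φ) :
    IsPureStateSym r (fun A : Matrix (Fin r) (Fin r) ℝ => φ (A.map fun c => ι n (C c))) := by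
  refine ⟨hφ.1.comp_embed hn, fun ψ₁ ψ₂ h₁ h₂ hmid A hA => ?_⟩
  have hmid' : ∀ G, InSymLoc n r G → 2 * φ G = ψ₁ (condExp φ G) + ψ₂ (condExp φ G) :=
    fun G hG => by
      rw [hφ.map_embed_condExp hn hG]
      exact hmid _ (condExp_isSymm hG)
  have h := hφ.2 _ _ (h₁.comp_condExp hn hφ) (h₂.comp_condExp hn hφ) hmid' (embed n A)
    (inSymLoc_embed hn hA)
  simp only [condExp_embed hn hφ.1] at h
  exact h

end
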